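/- arXiv:math/0302269 — 3 statements merged into one kernel-verified Lean document; each statement's English description precedes it below -/
import Mathlib

section
/- Let V be a module over a Lie algebra on which a nilpotent element set acts: specifically, let n be a Lie subalgebra of g acting on a g-module V, with n acting locally nilpotently on g via the adjoint action. Then j⁰(V) = ⋃_{N≥0} Ann_{nᴺ}(V) is a g-submodule of V. -/
/-- The subspace `Ann_{nᴺ} V ⊆ V`: vectors killed by every product of `N` elements of `n`,
and `j⁰(V) = ⋃_N Ann_{nᴺ} V`. -/
def jZeroSet {g : Type*} [LieRing g] [LieAlgebra ℂ g] (n : LieSubalgebra ℂ g)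
    (V : Type*) [AddCommGroup V] [Module ℂ V] [LieRingModule g V] : Set V :=
  {v | ∃ N : ℕ, ∀ l : List n, l.length = N →
    l.foldr (fun y w => ⁅(y : g), w⁆) v = 0}

section Aux

variable {g : Type*} [LieRing g] [LieAlgebra ℂ g] {n : LieSubalgebra ℂ g}
variable {W : Type*} [AddCommGroup W] [LieRingModule g W]

set_option linter.unusedSectionVars false

/-- The foldr over a list of `n` appearing in `jZeroSet` is a foldr over the coerced
list in `g`. -/
lemma coe_foldr (l : List n) (v : W) :
    l.foldr (fun y w => ⁅(y : g), w⁆) v =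
      (l.map ((↑) : n → g)).foldr (fun y w => ⁅y, w⁆) v := by
  induction l with
  | nil => rfl
  | cons y l ih =>
    show ⁅(y : g), l.foldr (fun y w => ⁅(y : g), w⁆) v⁆ =
      ⁅(y : g), (l.map ((↑) : n → g)).foldr (fun y w => ⁅y, w⁆) v⁆
    rw [ih]

lemma mem_map_coe (l : List n) : ∀ z ∈ l.map ((↑) : n → g), z ∈ n := by
  intro z hz
  obtain ⟨y, -, rfl⟩ := List.mem_map.1 hz
  exact y.2

lemma foldr_zero (L : List g) : L.foldr (fun y (w : W) => ⁅y, w⁆) 0 = 0 := by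
  induction L with
  | nil => rfl
  | cons y L ih => show ⁅y, L.foldr _ (0 : W)⁆ = 0; rw [ih, lie_zero]

lemma foldr_add (L : List g) (u w : W) :
    L.foldr (fun y (w : W) => ⁅y, w⁆) (u + w) =
      L.foldr (fun y (w : W) => ⁅y, w⁆) u + L.foldr (fun y (w : W) => ⁅y, w⁆) w := by
  induction L with
  | nil => rfl
  | cons y L ih => show ⁅y, L.foldr _ (u + w)⁆ = _; rw [ih, lie_add]; rfl

/-- Transfer an annihilation hypothesis from lists of `n` to lists of `g` with entries
in `n`. -/
lemma of_subtype_lists {N : ℕ} {v : W}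
    (h : ∀ l : List n, l.length = N → l.foldr (fun y w => ⁅(y : g), w⁆) v = 0)
    (L : List g) (hL : ∀ z ∈ L, z ∈ n) (hlen : L.length = N) :
    L.foldr (fun y (w : W) => ⁅y, w⁆) v = 0 := by
  have key := h (L.pmap (fun z hz => (⟨z, hz⟩ : n)) hL) (by rw [List.length_pmap, hlen])
  rw [coe_foldr] at key
  rwa [List.map_pmap, List.pmap_eq_map, List.map_id'] at key

lemma foldr_mono {N : ℕ} {v : W}
    (hv : ∀ L : List g, (∀ z ∈ L, z ∈ n) → L.length = N →
      L.foldr (fun y (w : W) => ⁅y, w⁆) v = 0)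
    {M : ℕ} (hMN : N ≤ M) (L : List g) (hL : ∀ z ∈ L, z ∈ n) (hlen : L.length = M) :
    L.foldr (fun y (w : W) => ⁅y, w⁆) v = 0 := by
  have h : L = L.take (M - N) ++ L.drop (M - N) := (List.take_append_drop _ _).symm
  rw [h, List.foldr_append,
    hv (L.drop (M - N)) (fun z hz => hL z (List.mem_of_mem_drop hz))
      (by rw [List.length_drop, hlen]; omega),
    foldr_zero]

lemma key_lemma {V : Type*} [AddCommGroup V] [LieRingModule g V] :
    ∀ (m a b : ℕ), a + b = m → ∀ (x : g) (v : V),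
    (∀ L : List g, (∀ z ∈ L, z ∈ n) → L.length = a →
      L.foldr (fun y z => ⁅y, z⁆) x = 0) →
    (∀ L : List g, (∀ z ∈ L, z ∈ n) → L.length = b →
      L.foldr (fun y (w : V) => ⁅y, w⁆) v = 0) →
    ∀ L : List g, (∀ z ∈ L, z ∈ n) → L.length = a + b →
      L.foldr (fun y (w : V) => ⁅y, w⁆) ⁅x, v⁆ = 0 := by
  intro m
  induction m with
  | zero =>
    intro a b hab x v hx hv L hL hlen
    have ha : a = 0 := by omega
    have : x = 0 := by simpa using hx [] (by simp) (by simp [ha])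
    rw [this, zero_lie, foldr_zero]
  | succ m ih =>
    intro a b hab x v hx hv L hL hlen
    rcases Nat.eq_zero_or_pos a with ha | ha
    · have : x = 0 := by simpa using hx [] (by simp) (by simp [ha])
      rw [this, zero_lie, foldr_zero]
    rcases Nat.eq_zero_or_pos b with hb | hb
    · have : v = 0 := by simpa using hv [] (by simp) (by simp [hb])
      rw [this, lie_zero, foldr_zero]
    rcases L.eq_nil_or_concat with rfl | ⟨L', y, rfl⟩
    · simp at hlen; omega
    have hy : y ∈ n := hL y (by simp [List.concat_eq_append])
    have hL' : ∀ z ∈ L', z ∈ n := fun z hz => hL z (by simp [List.concat_eq_append, hz])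
    have hlen' : L'.length = a + b - 1 := by
      rw [List.concat_eq_append, List.length_append] at hlen
      simp at hlen; omega
    rw [List.concat_eq_append, List.foldr_append]
    show L'.foldr (fun y (w : V) => ⁅y, w⁆) ⁅y, ⁅x, v⁆⁆ = 0
    rw [leibniz_lie, foldr_add]
    have h1 : L'.foldr (fun y (w : V) => ⁅y, w⁆) ⁅⁅y, x⁆, v⁆ = 0 := by
      refine ih (a - 1) b (by omega) ⁅y, x⁆ v ?_ hv L' hL' (by omega)
      intro L'' hL'' hlen''
      have := hx (L'' ++ [y]) (by
        intro z hz
        rcases List.mem_append.1 hz with h | h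
        · exact hL'' z h
        · rw [List.mem_singleton.1 h]; exact hy)
        (by rw [List.length_append, hlen'']; simp; omega)
      rwa [List.foldr_append] at this
    have h2 : L'.foldr (fun y (w : V) => ⁅y, w⁆) ⁅x, ⁅y, v⁆⁆ = 0 := by
      refine ih a (b - 1) (by omega) x ⁅y, v⁆ hx ?_ L' hL' (by omega)
      intro L'' hL'' hlen''
      have := hv (L'' ++ [y]) (by
        intro z hz
        rcases List.mem_append.1 hz with h | h
        · exact hL'' z h
        · rw [List.mem_singleton.1 h]; exact hy)
        (by rw [List.length_append, hlen'']; simp; omega)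
      rwa [List.foldr_append] at this
    rw [h1, h2, add_zero]

end Aux

/-- Let `n` be a Lie subalgebra of `g` acting locally nilpotently on `g` via the adjoint
action, and let `V` be a `g`-module. Then `j⁰(V) = ⋃_{N≥0} Ann_{nᴺ}(V)` is a `g`-submodule
of `V`: it is closed under addition, scalar multiplication, and the action of all of `g`. -/
theorem jZeroSet_is_g_submodule
    {g : Type*} [LieRing g] [LieAlgebra ℂ g] (n : LieSubalgebra ℂ g)
    (hnil : ∀ x : g, ∃ k : ℕ, ∀ l : List n, l.length = k →
      l.foldr (fun y z => ⁅(y : g), z⁆) x = 0)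
    (V : Type*) [AddCommGroup V] [Module ℂ V] [LieRingModule g V] [LieModule ℂ g V] :
    (∀ v w : V, v ∈ jZeroSet n V → w ∈ jZeroSet n V → v + w ∈ jZeroSet n V) ∧
    (∀ (c : ℂ) (v : V), v ∈ jZeroSet n V → c • v ∈ jZeroSet n V) ∧
    (∀ (x : g) (v : V), v ∈ jZeroSet n V → ⁅x, v⁆ ∈ jZeroSet n V) := by
  refine ⟨?_, ?_, ?_⟩
  · rintro v w ⟨N₁, h₁⟩ ⟨N₂, h₂⟩
    refine ⟨max N₁ N₂, fun l hl => ?_⟩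
    rw [coe_foldr, foldr_add,
      foldr_mono (of_subtype_lists h₁) (le_max_left _ _) _ (mem_map_coe l)
        (by rw [List.length_map, hl]),
      foldr_mono (of_subtype_lists h₂) (le_max_right _ _) _ (mem_map_coe l)
        (by rw [List.length_map, hl]),
      add_zero]
  · rintro c v ⟨N, h⟩
    refine ⟨N, fun l hl => ?_⟩
    rw [coe_foldr]
    have smul_foldr : ∀ L : List g, L.foldr (fun y (w : V) => ⁅y, w⁆) (c • v) =
        c • L.foldr (fun y (w : V) => ⁅y, w⁆) v := by
      intro L
      induction L with
      | nil => rfl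
      | cons y L ih => show ⁅y, L.foldr _ (c • v)⁆ = _; rw [ih, lie_smul]; rfl
    rw [smul_foldr, of_subtype_lists h _ (mem_map_coe l) (by rw [List.length_map, hl]),
      smul_zero]
  · rintro x v ⟨N, h⟩
    obtain ⟨k, hk⟩ := hnil x
    refine ⟨k + N, fun l hl => ?_⟩
    rw [coe_foldr]
    exact key_lemma (k + N) k N rfl x v (of_subtype_lists hk) (of_subtype_lists h)
      _ (mem_map_coe l) (by rw [List.length_map, hl])
end

section
/- Let g be a Lie algebra, n a Lie subalgebra acting locally nilpotently on g by the adjoint action, V a g-module, and V* its full dual. Then the subspace ⋃_{k≥1} Ann_{nᵏ}(V*) = ⋃_{k≥1} (V/nᵏV)* is a g-submodule of V*. -/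
/-- The subset `⋃_{k≥1} Ann_{nᵏ}(V*) = ⋃_{k≥1} (V/nᵏV)*` of the full dual `V*`:
functionals vanishing on `nᵏ V`, i.e. on every vector of the form `y₁ ⋯ y_k · v`
with `yᵢ ∈ n`, `v ∈ V`. -/
def jZeroDualSet {g : Type*} [LieRing g] [LieAlgebra ℂ g] (n : LieSubalgebra ℂ g)
    (V : Type*) [AddCommGroup V] [Module ℂ V] [LieRingModule g V] :
    Set (Module.Dual ℂ V) :=
  {η | ∃ k : ℕ, ∀ l : List n, l.length = k → ∀ v : V,
    η (l.foldr (fun y w => ⁅(y : g), w⁆) v) = 0}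

namespace JZAux

variable {g : Type*} [LieRing g] [LieAlgebra ℂ g] {n : LieSubalgebra ℂ g}
variable {V : Type*} [AddCommGroup V] [Module ℂ V] [LieRingModule g V]

/-- Iterated action of a list of elements of `n` on `V`. -/
def F (l : List n) (v : V) : V := l.foldr (fun y w => ⁅(y : g), w⁆) v

/-- Iterated adjoint action of a list of elements of `n` on `g`. -/
def A (l : List n) (x : g) : g := l.foldr (fun y z => ⁅(y : g), z⁆) x

@[simp] lemma F_nil (v : V) : F ([] : List n) v = v := rfl
@[simp] lemma F_cons (y : n) (l : List n) (v : V) : F (y :: l) v = ⁅(y : g), F l v⁆ := rfl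
lemma F_append (a b : List n) (v : V) : F (a ++ b) v = F a (F b v) := by
  simp [F, List.foldr_append]

@[simp] lemma A_nil (x : g) : A ([] : List n) x = x := rfl
@[simp] lemma A_cons (y : n) (l : List n) (x : g) : A (y :: l) x = ⁅(y : g), A l x⁆ := rfl
lemma A_append (a b : List n) (x : g) : A (a ++ b) x = A a (A b x) := by
  simp [A, List.foldr_append]

@[simp] lemma A_zero (l : List n) : A l (0 : g) = 0 := by
  induction l with
  | nil => rfl
  | cons y t ih => simp [ih]

lemma A_neg (l : List n) (x : g) : A l (-x) = -A l x := by
  induction l with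
  | nil => rfl
  | cons y t ih => simp [ih]

/-- Upgrade "vanishes on lists of length exactly `k`" to "length at least `k`". -/
lemma F_ge (η : Module.Dual ℂ V)
    (h : ∀ l : List n, l.length = k → ∀ v, η (F l v) = 0)
    (l : List n) (hl : k ≤ l.length) (v : V) : η (F l v) = 0 := by
  have hsplit : l = l.take k ++ l.drop k := (List.take_append_drop k l).symm
  rw [hsplit, F_append]
  exact h _ (by simp [hl]) _

/-- Upgrade nilpotency from exactly `m` to lists of length at least `m`. -/
lemma A_ge (x : g)
    (h : ∀ l : List n, l.length = m → A l x = 0)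
    (l : List n) (hl : m ≤ l.length) : A l x = 0 := by
  have hsplit : l = l.take (l.length - m) ++ l.drop (l.length - m) :=
    (List.take_append_drop _ l).symm
  rw [hsplit, A_append, h _ (by simp; omega), A_zero]

/-- Main combinatorial lemma: moving `x` through a long enough product kills `η`. -/
lemma main [LieModule ℂ g V] :
    ∀ (l : List n) (η : Module.Dual ℂ V) (x : g) (k m : ℕ),
      (∀ l' : List n, k ≤ l'.length → ∀ v, η (F l' v) = 0) →
      (∀ l' : List n, m ≤ l'.length → A l' x = 0) →
      k + m ≤ l.length → ∀ v, η ⁅x, F l v⁆ = 0 := by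
  intro l
  induction l with
  | nil =>
    intro η x k m hη hx hlen v
    simp only [List.length_nil, Nat.le_zero, Nat.add_eq_zero] at hlen
    have hx0 : x = 0 := by
      have := hx [] (by simp [hlen.2]); simpa using this
    simp [hx0]
  | cons y t ih =>
    intro η x k m hη hx hlen v
    rcases k with _ | k'
    · have := hη [] (Nat.zero_le _) ⁅x, F (y :: t) v⁆
      simpa using this
    rcases m with _ | m'
    · have hx0 : x = 0 := by
        have := hx [] (Nat.zero_le _); simpa using this
      simp [hx0]
    have step : (⁅x, F (y :: t) v⁆ : V)
        = ⁅(⁅x, (y : g)⁆ : g), F t v⁆ + ⁅(y : g), ⁅x, F t v⁆⁆ := by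
      rw [F_cons, leibniz_lie]
    rw [step, map_add]
    have hlen' : k' + 1 + m' ≤ t.length := by
      simp only [List.length_cons] at hlen; omega
    have h1 : η ⁅(⁅x, (y : g)⁆ : g), F t v⁆ = 0 := by
      refine ih η ⁅x, (y : g)⁆ (k' + 1) m' hη ?_ hlen' v
      intro l' hl'
      have h2 : A (l' ++ [y]) x = 0 := hx _ (by simp; omega)
      have h3 : A l' ⁅x, (y : g)⁆ = -A (l' ++ [y]) x := by
        rw [A_append]
        have : A [y] x = ⁅(y : g), x⁆ := by simp
        rw [this, ← A_neg]
        congr 1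
        rw [← lie_skew]
      rw [h3, h2, neg_zero]
    have h2 : η ⁅(y : g), ⁅x, F t v⁆⁆ = 0 := by
      set η' : Module.Dual ℂ V := η ∘ₗ LieModule.toEnd ℂ g V (y : g) with hη'
      have hval : ∀ w : V, η' w = η ⁅(y : g), w⁆ := fun w => by
        simp [hη', LieModule.toEnd_apply_apply]
      have := ih η' x k' (m' + 1) ?_ hx (by omega) v
      · rw [← hval]; exact this
      · intro l' hl' w
        rw [hval]
        exact hη (y :: l') (by simp; omega) w
    rw [h1, h2, add_zero]

end JZAux

/-- Let `g` be a Lie algebra, `n` a Lie subalgebra acting locally nilpotently on `g` by the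
adjoint action, `V` a `g`-module and `V*` its full dual with the contragredient action
`(x · η)(v) = -η(x · v)`. Then `⋃_{k≥1} Ann_{nᵏ}(V*)` is a `g`-submodule of `V*`. -/
theorem jZeroDualSet_is_g_submodule
    {g : Type*} [LieRing g] [LieAlgebra ℂ g] (n : LieSubalgebra ℂ g)
    (hnil : ∀ x : g, ∃ m : ℕ, ∀ l : List n, l.length = m →
      l.foldr (fun y z => ⁅(y : g), z⁆) x = 0)
    (V : Type*) [AddCommGroup V] [Module ℂ V] [LieRingModule g V] [LieModule ℂ g V] :
    (∀ η θ : Module.Dual ℂ V, η ∈ jZeroDualSet n V → θ ∈ jZeroDualSet n V →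
      η + θ ∈ jZeroDualSet n V) ∧
    (∀ (c : ℂ) (η : Module.Dual ℂ V), η ∈ jZeroDualSet n V → c • η ∈ jZeroDualSet n V) ∧
    (∀ (x : g) (η : Module.Dual ℂ V), η ∈ jZeroDualSet n V →
      (-(η ∘ₗ (LieModule.toEnd ℂ g V x))) ∈ jZeroDualSet n V) := by
  refine ⟨?_, ?_, ?_⟩
  · rintro η θ ⟨k₁, hη⟩ ⟨k₂, hθ⟩
    refine ⟨max k₁ k₂, fun l hl v => ?_⟩
    have h1 := JZAux.F_ge η hη l (by omega) v
    have h2 := JZAux.F_ge θ hθ l (by omega) v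
    simp only [LinearMap.add_apply]
    rw [show l.foldr (fun y w => ⁅(y : g), w⁆) v = JZAux.F l v from rfl] at *
    rw [h1, h2, add_zero]
  · rintro c η ⟨k, hη⟩
    refine ⟨k, fun l hl v => ?_⟩
    simp only [LinearMap.smul_apply]
    rw [hη l hl v, smul_zero]
  · rintro x η ⟨k, hη⟩
    obtain ⟨m, hm⟩ := hnil x
    refine ⟨k + m, fun l hl v => ?_⟩
    have hηge := JZAux.F_ge η hη
    have hxge := JZAux.A_ge x hm
    have := JZAux.main l η x k m hηge hxge (by omega) v
    simp only [LinearMap.neg_apply, LinearMap.coe_comp, Function.comp_apply,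
      LieModule.toEnd_apply_apply]
    rw [show l.foldr (fun y w => ⁅(y : g), w⁆) v = JZAux.F l v from rfl, this, neg_zero]
end

section
/- Let V = ⊕_{ξ} V^ξ be a ℂ-graded module over the affine Kac-Moody algebra g̃ of central charge κ - h∨ with κ ∉ ℚ_{≥0}, belonging to the affine Harish-Chandra category. Suppose the map g ⊗ V^ξ → V^{ξ+1}, x ⊗ v ↦ (x t⁻¹) v, is surjective for all ξ with Re ξ ≥ ζ. Then for any positive integer N, there exists ζ' ∈ ℝ such that ⊕_{Re ξ ≥ ζ'} V^ξ ⊆ U(n̂₋)^{-N} V, where n̂₋ = t⁻¹ g[t⁻¹]. -/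
/-- Let `V = ⊕_ξ V^ξ` be a `ℂ`-graded module over the affine Kac--Moody algebra `g̃`
(with `a x n` the action of `x tⁿ`, mapping `V^ξ` to `V^{ξ-n}`), belonging to the affine
Harish-Chandra category.  Suppose the map `g ⊗ V^ξ → V^{ξ+1}`, `x ⊗ v ↦ (x t⁻¹) v`, is
surjective for all `ξ` with `Re ξ ≥ ζ`.  Then for every positive integer `N` there is
`ζ' ∈ ℝ` such that `⊕_{Re ξ ≥ ζ'} V^ξ ⊆ U(n̂₋)^{-N} V`, where `n̂₋ = t⁻¹ g[t⁻¹]` and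
`U(n̂₋)^{-N}` is spanned by the monomials `(x₁ t^{n₁}) ⋯ (x_r t^{n_r})` with all
`nᵢ ≤ -1` and `n₁ + ⋯ + n_r = -N`. -/
theorem graded_pieces_in_negative_part
    {g : Type*} [LieRing g] [LieAlgebra ℂ g]
    {V : Type*} [AddCommGroup V] [Module ℂ V]
    (Vc : ℂ → Submodule ℂ V)
    (a : g → ℤ → Module.End ℂ V)
    (hshift : ∀ (x : g) (n : ℤ) (ξ : ℂ), ∀ v ∈ Vc ξ, a x n v ∈ Vc (ξ - (n : ℂ)))
    (ζ : ℝ)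
    (hsurj : ∀ ξ : ℂ, ζ ≤ ξ.re → Vc (ξ + 1) ≤ Submodule.span ℂ
      {w | ∃ (x : g) (v : V), v ∈ Vc ξ ∧ w = a x (-1) v}) :
    ∀ N : ℕ, 0 < N → ∃ ζ' : ℝ, ∀ ξ : ℂ, ζ' ≤ ξ.re → ∀ v ∈ Vc ξ,
      v ∈ Submodule.span ℂ {w | ∃ (l : List (g × ℤ)) (u : V),
        (∀ p ∈ l, p.2 ≤ -1) ∧ (l.map Prod.snd).sum = -(N : ℤ) ∧
        w = l.foldr (fun p z => a p.1 p.2 z) u} := by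
  intro N _
  suffices h : ∀ M : ℕ, ∀ ξ : ℂ, ζ + M ≤ ξ.re → ∀ v ∈ Vc ξ,
      v ∈ Submodule.span ℂ {w | ∃ (l : List (g × ℤ)) (u : V),
        (∀ p ∈ l, p.2 ≤ -1) ∧ (l.map Prod.snd).sum = -(M : ℤ) ∧
        w = l.foldr (fun p z => a p.1 p.2 z) u} by
    exact ⟨ζ + N, h N⟩
  intro M
  induction M with
  | zero =>
    intro ξ _ v hv
    exact Submodule.subset_span ⟨[], v, by simp, by simp, rfl⟩
  | succ M ih =>
    intro ξ hξ v hv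
    have hM : (0 : ℝ) ≤ M := M.cast_nonneg
    have hre : ζ + M ≤ (ξ - 1).re := by
      push_cast at hξ
      simp only [Complex.sub_re, Complex.one_re]
      linarith
    have h1 : v ∈ Submodule.span ℂ {w | ∃ x u, u ∈ Vc (ξ - 1) ∧ w = a x (-1) u} := by
      apply hsurj (ξ - 1) (by linarith)
      simpa using hv
    refine Submodule.span_le.mpr ?_ h1
    rintro w ⟨x, u, hu, rfl⟩
    have key : (a x (-1)) u ∈ (Submodule.span ℂ {w | ∃ (l : List (g × ℤ)) (u : V),
        (∀ p ∈ l, p.2 ≤ -1) ∧ (l.map Prod.snd).sum = -(M : ℤ) ∧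
        w = l.foldr (fun p z => a p.1 p.2 z) u}).map (a x (-1)) :=
      Submodule.mem_map_of_mem (ih (ξ - 1) hre u hu)
    rw [Submodule.map_span] at key
    refine Submodule.span_le.mpr ?_ key
    rintro w ⟨w', ⟨l, u', hl, hsum, rfl⟩, rfl⟩
    refine Submodule.subset_span ⟨(x, -1) :: l, u', ?_, ?_, rfl⟩
    · intro p hp
      rcases List.mem_cons.mp hp with h | h
      · simp [h]
      · exact hl p h
    · simp only [List.map_cons, List.sum_cons, hsum]
      push_cast
      ring
end
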